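/- Whitney decomposition identity: for s, t ∈ (0,1), the indicator function 1_{s<t} equals the sum over pairs of dyadic intervals I ∼ J of 1_I(t)·1_J(s), where I ∼ J means I and J are dyadic subintervals of [0,1] of the same length, not adjacent, with adjacent parents, and I lies to the right of J. -/

import Mathlib

/-!
Write `⌊x 2^k⌋₊` for the index of the generation-`k` dyadic interval containing `x`. Halving an
index gives the index of the parent, so once the indices of `s` and `t` differ by at least two
they do so at every later generation, while at generation `0` both are `0`. The unique Whitney
pair is read off at the first generation `k` where they differ by two: there the parents are
distinct but not two apart, i.e. adjacent.
-/

namespace Nat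

variable {a b : ℕ → ℕ}

theorem monotone_add_two_le_of_div_two (ha : ∀ k, a (k + 1) / 2 = a k)
    (hb : ∀ k, b (k + 1) / 2 = b k) : Monotone fun k => a k + 2 ≤ b k :=
  monotone_nat_of_le_succ fun k (h : a k + 2 ≤ b k) => by
    have := ha k
    have := hb k
    change a (k + 1) + 2 ≤ b (k + 1)
    omega

theorem div_two_eq_div_two_add_one_iff (ha : ∀ k, a (k + 1) / 2 = a k)
    (hb : ∀ k, b (k + 1) / 2 = b k) {k : ℕ} (hle : a k ≤ b k)
    (hsep : a (k + 1) + 2 ≤ b (k + 1)) :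
    b (k + 1) / 2 = a (k + 1) / 2 + 1 ↔ ¬ a k + 2 ≤ b k := by
  have := ha k
  have := hb k
  omega

theorem existsUnique_add_two_le_div_two_eq (ha : ∀ k, a (k + 1) / 2 = a k)
    (hb : ∀ k, b (k + 1) / 2 = b k) (hle : ∀ k, a k ≤ b k) (h0 : ¬ a 0 + 2 ≤ b 0)
    (hex : ∃ k, a k + 2 ≤ b k) :
    ∃! k, 1 ≤ k ∧ a k + 2 ≤ b k ∧ b k / 2 = a k / 2 + 1 := by
  classical
  have hmono := monotone_add_two_le_of_div_two ha hb
  have key : ∀ k, (1 ≤ k ∧ a k + 2 ≤ b k ∧ b k / 2 = a k / 2 + 1) ↔ k = Nat.find hex := by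
    rintro (_ | m)
    · have hfind : Nat.find hex ≠ 0 := fun h => h0 (h ▸ Nat.find_spec hex)
      simp [hfind.symm]
    · rw [eq_comm (a := m + 1), Nat.find_eq_iff]
      have hbefore : (∀ n < m + 1, ¬ a n + 2 ≤ b n) ↔ ¬ a m + 2 ≤ b m :=
        ⟨fun h => h m m.lt_succ_self, fun h n hn hsep => h (hmono (Nat.le_of_lt_succ hn) hsep)⟩
      rw [hbefore]
      constructor
      · rintro ⟨-, hsep, hpar⟩
        exact ⟨hsep, (div_two_eq_div_two_add_one_iff ha hb (hle m) hsep).1 hpar⟩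
      · rintro ⟨hsep, hprev⟩
        exact ⟨m.succ_pos, hsep, (div_two_eq_div_two_add_one_iff ha hb (hle m) hsep).2 hprev⟩
  exact ⟨Nat.find hex, (key _).2 rfl, fun k hk => (key k).1 hk⟩

theorem floor_mul_two_pow_succ_div_two (x : ℝ) (k : ℕ) :
    ⌊x * 2 ^ (k + 1)⌋₊ / 2 = ⌊x * 2 ^ k⌋₊ := by
  rw [← Nat.floor_div_ofNat, pow_succ, ← mul_assoc, mul_div_cancel_right₀ _ two_ne_zero]

theorem floor_mul_two_pow_lt {x : ℝ} (hx : x < 1) (k : ℕ) : ⌊x * 2 ^ k⌋₊ < 2 ^ k := by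
  rw [Nat.floor_lt' (by positivity)]
  push_cast
  exact mul_lt_of_lt_one_left (by positivity) hx

theorem exists_floor_mul_two_pow_add_two_le {x y : ℝ} (hx : 0 ≤ x) (hxy : x < y) :
    ∃ k : ℕ, ⌊x * 2 ^ k⌋₊ + 2 ≤ ⌊y * 2 ^ k⌋₊ := by
  obtain ⟨k, hk⟩ := pow_unbounded_of_one_lt (2 / (y - x)) one_lt_two
  refine ⟨k, ?_⟩
  rw [div_lt_iff₀ (sub_pos.2 hxy)] at hk
  rw [← Nat.floor_add_ofNat (by positivity)]
  exact Nat.floor_mono (by linarith)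

end Nat

theorem mem_Ico_div_two_pow_iff {x : ℝ} (hx : 0 ≤ x) (i k : ℕ) :
    x ∈ Set.Ico ((i : ℝ) / 2 ^ k) ((i + 1 : ℝ) / 2 ^ k) ↔ ⌊x * 2 ^ k⌋₊ = i := by
  rw [Nat.floor_eq_iff (by positivity), Set.mem_Ico, div_le_iff₀ (by positivity),
    lt_div_iff₀ (by positivity)]

/-- **Whitney decomposition of `{s < t}`.** For `s, t ∈ (0,1)` with
`s < t`, there is exactly one triple `(k, i, j)` with `k ≥ 1` indexing dyadic
intervals `J = [i2^{-k}, (i+1)2^{-k})` and `I = [j2^{-k}, (j+1)2^{-k})` of `[0,1]`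
of the same length that are not adjacent (`i + 2 ≤ j`, so `I` lies to the right of
`J`) but have adjacent parents (`j/2 = i/2 + 1`), such that `t ∈ I` and `s ∈ J`.
Hence `1_{s<t} = Σ_{I ∼ J} 1_I(t)·1_J(s)`. -/
theorem stmt7 (s t : ℝ) (hs : 0 < s) (hst : s < t) (ht : t < 1) :
    ∃! w : ℕ × ℕ × ℕ,
      1 ≤ w.1 ∧ w.2.2 < 2 ^ w.1 ∧
      w.2.1 + 2 ≤ w.2.2 ∧ w.2.2 / 2 = w.2.1 / 2 + 1 ∧
      s ∈ Set.Ico ((w.2.1 : ℝ) / 2 ^ w.1) ((w.2.1 + 1 : ℝ) / 2 ^ w.1) ∧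
      t ∈ Set.Ico ((w.2.2 : ℝ) / 2 ^ w.1) ((w.2.2 + 1 : ℝ) / 2 ^ w.1) := by
  have ht0 : 0 ≤ t := hs.le.trans hst.le
  obtain ⟨k, ⟨hk1, hsep, hpar⟩, hunique⟩ :=
    Nat.existsUnique_add_two_le_div_two_eq (Nat.floor_mul_two_pow_succ_div_two s)
      (Nat.floor_mul_two_pow_succ_div_two t)
      (fun k => Nat.floor_mono (mul_le_mul_of_nonneg_right hst.le (by positivity)))
      (by simp [Nat.floor_eq_zero.2 ht])
      (Nat.exists_floor_mul_two_pow_add_two_le hs.le hst)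
  refine ⟨(k, ⌊s * 2 ^ k⌋₊, ⌊t * 2 ^ k⌋₊), ⟨hk1, Nat.floor_mul_two_pow_lt ht k, hsep, hpar,
    (mem_Ico_div_two_pow_iff hs.le _ _).2 rfl, (mem_Ico_div_two_pow_iff ht0 _ _).2 rfl⟩, ?_⟩
  rintro ⟨k', i, j⟩ ⟨hk1', -, hsep', hpar', hsi, htj⟩
  dsimp only at *
  rw [mem_Ico_div_two_pow_iff hs.le] at hsi
  rw [mem_Ico_div_two_pow_iff ht0] at htj
  subst hsi htj
  obtain rfl := hunique k' ⟨hk1', hsep', hpar'⟩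
  rfl
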